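/- arXiv:2108.08462 — 2 statements merged into one kernel-verified Lean document; each statement's English description precedes it below -/
import Mathlib

section
/- Suppose a family of matrices {A_i : i ∈ I} admits symmetric matrices P_i ≥ I with A_i^T P_i + P_i A_i ≤ -λ P_i for all i, and P_i ≤ μ P_j for all i,j, with λ > 0 and μ ≥ 1. If a piecewise-constant switching signal σ has dwell time τ_d ≥ ln(μ)/λ, then the switched Lyapunov function V(t) = x(t)^T P_{σ(t)} x(t) along solutions of ẋ = A_{σ(t)} x satisfies V(t_{k+1}) ≤ V(t_k) at consecutive switching times, i.e., V is nonincreasing over switching intervals. -/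
/-!
On each dwell interval `[t k, t (k+1))` the mode `i = σ (t k)` is frozen, and the Lyapunov
inequality gives `d/ds (xᵀ P_i x) ≤ -λ xᵀ P_i x`, so `xᵀ P_i x` decays at least like `e^{-λ s}`.
At the switch the Lyapunov matrix changes from `P_i` to `P_j ≤ μ P_i`, which can raise the value
by at most the factor `μ`; the dwell time `τ_d ≥ ln μ / λ` makes the decay `e^{-λ τ_d} ≤ μ⁻¹`
absorb this jump.
-/

open Matrix Set Real

section Derivatives

variable {𝕜 : Type*} [NontriviallyNormedField 𝕜] {m n : Type*} [Fintype n]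

theorem HasDerivAt.dotProduct {u v : 𝕜 → n → 𝕜} {u' v' : n → 𝕜} {s : 𝕜}
    (hu : HasDerivAt u u' s) (hv : HasDerivAt v v' s) :
    HasDerivAt (fun s => u s ⬝ᵥ v s) (u' ⬝ᵥ v s + u s ⬝ᵥ v') s := by
  have h := HasDerivAt.fun_sum (u := Finset.univ) fun j _ =>
    (hasDerivAt_pi.1 hu j).mul (hasDerivAt_pi.1 hv j)
  simpa only [_root_.dotProduct, Pi.mul_apply, Finset.sum_add_distrib] using h

theorem HasDerivAt.mulVec (M : Matrix m n 𝕜) {x : 𝕜 → n → 𝕜} {x' : n → 𝕜} {s : 𝕜}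
    (hx : HasDerivAt x x' s) : HasDerivAt (fun s => M *ᵥ x s) (M *ᵥ x') s :=
  hasDerivAt_pi.2 fun i => by
    simpa only [Matrix.mulVec, _root_.dotProduct] using
      HasDerivAt.fun_sum (u := Finset.univ) fun j _ => (hasDerivAt_pi.1 hx j).const_mul (M i j)

end Derivatives

section QuadraticForms

variable {n : Type*} [Fintype n]

theorem Matrix.dotProduct_mulVec_le_of_posSemidef_sub {P Q : Matrix n n ℝ}
    (h : (Q - P).PosSemidef) (v : n → ℝ) : v ⬝ᵥ P *ᵥ v ≤ v ⬝ᵥ Q *ᵥ v := by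
  simpa only [star_trivial, sub_mulVec, dotProduct_sub, sub_nonneg] using
    h.dotProduct_mulVec_nonneg v

/-- The left side is the derivative of `xᵀ P x` along `ẋ = A x`. -/
theorem Matrix.lyapunov_derivative_le {A P : Matrix n n ℝ} {lam : ℝ}
    (h : ((-(lam • P)) - (Aᵀ * P + P * A)).PosSemidef) (v : n → ℝ) :
    (A *ᵥ v) ⬝ᵥ P *ᵥ v + v ⬝ᵥ P *ᵥ (A *ᵥ v) ≤ -(lam * (v ⬝ᵥ P *ᵥ v)) := by
  have := dotProduct_mulVec_le_of_posSemidef_sub h v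
  rwa [add_mulVec, ← mulVec_mulVec, ← mulVec_mulVec, dotProduct_add, dotProduct_mulVec v Aᵀ,
    vecMul_transpose, neg_mulVec, smul_mulVec, dotProduct_neg, dotProduct_smul, smul_eq_mul]
    at this

end QuadraticForms

theorem Real.mul_exp_neg_le_one {μ c : ℝ} (hμ : 0 < μ) (h : log μ ≤ c) : μ * exp (-c) ≤ 1 := by
  rw [← exp_log hμ, ← exp_add, exp_le_one_iff]
  linarith

/-- The integrating factor `e^{c s}` turns `W' ≤ -c W` into
monotonicity of `e^{c s} W s`. -/
theorem le_exp_neg_mul_of_hasDerivAt_le {W W' : ℝ → ℝ} {a b c : ℝ} (hab : a ≤ b)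
    (hW : ContinuousOn W (Icc a b)) (hW' : ∀ s ∈ Ioo a b, HasDerivAt W (W' s) s)
    (hle : ∀ s ∈ Ioo a b, W' s ≤ -(c * W s)) : W b ≤ exp (-(c * (b - a))) * W a := by
  have hexp (s : ℝ) : HasDerivAt (fun s => exp (c * s)) (exp (c * s) * c) s := by
    simpa using ((hasDerivAt_id s).const_mul c).exp
  have hanti : AntitoneOn (fun s => exp (c * s) * W s) (Icc a b) := by
    refine antitoneOn_of_hasDerivWithinAt_nonpos (convex_Icc a b)
      ((continuous_exp.comp (continuous_const_mul c)).continuousOn.mul hW)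
      (f' := fun s => exp (c * s) * c * W s + exp (c * s) * W' s) ?_ ?_
    · intro s hs
      rw [interior_Icc] at hs ⊢
      exact ((hexp s).mul (hW' s hs)).hasDerivWithinAt
    · intro s hs
      rw [interior_Icc] at hs
      have := mul_le_mul_of_nonneg_left (hle s hs) (exp_pos (c * s)).le
      linarith
  have hba := hanti (left_mem_Icc.2 hab) (right_mem_Icc.2 hab) hab
  calc W b = exp (-(c * b)) * (exp (c * b) * W b) := by
        rw [← mul_assoc, ← exp_add, neg_add_cancel, exp_zero, one_mul]
    _ ≤ exp (-(c * b)) * (exp (c * a) * W a) := by gcongr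
    _ = exp (-(c * (b - a))) * W a := by rw [← mul_assoc, ← exp_add]; ring_nf

theorem switched_lyapunov_nonincreasing_at_switches_general {n : ℕ} {I : Type*}
    (A P : I → Matrix (Fin n) (Fin n) ℝ) (lam mu : ℝ)
    (hlam : 0 < lam) (hmu : 1 ≤ mu)
    (hPgeI : ∀ i, (P i - 1).PosSemidef)
    (hLyap : ∀ i, ((-(lam • P i)) - ((A i)ᵀ * P i + P i * A i)).PosSemidef)
    (hPmu : ∀ i j, (mu • P j - P i).PosSemidef)
    (σ : ℝ → I) (t : ℕ → ℝ) (htmono : StrictMono t)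
    (hdwell : ∀ k, Real.log mu / lam ≤ t (k + 1) - t k)
    (hσconst : ∀ k, ∀ s ∈ Set.Ico (t k) (t (k + 1)), σ s = σ (t k))
    (x : ℝ → (Fin n → ℝ)) (hx : ∀ s, HasDerivAt x ((A (σ s)).mulVec (x s)) s) :
    ∀ k, x (t (k + 1)) ⬝ᵥ (P (σ (t (k + 1)))).mulVec (x (t (k + 1))) ≤
      x (t k) ⬝ᵥ (P (σ (t k))).mulVec (x (t k)) := by
  intro k
  set i := σ (t k)
  set V : ℝ → ℝ := fun s => x s ⬝ᵥ P i *ᵥ x s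
  have hV (s : ℝ) : HasDerivAt V
      ((A (σ s) *ᵥ x s) ⬝ᵥ P i *ᵥ x s + x s ⬝ᵥ P i *ᵥ (A (σ s) *ᵥ x s)) s :=
    (hx s).dotProduct ((hx s).mulVec (P i))
  have hdecay : V (t (k + 1)) ≤ exp (-(lam * (t (k + 1) - t k))) * V (t k) :=
    le_exp_neg_mul_of_hasDerivAt_le (htmono k.lt_succ_self).le
      (continuousOn_of_forall_continuousAt fun s _ => (hV s).continuousAt) (fun s _ => hV s)
      fun s hs => by
        rw [hσconst k s (Ioo_subset_Ico_self hs)]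
        exact lyapunov_derivative_le (hLyap i) (x s)
  have hjump := dotProduct_mulVec_le_of_posSemidef_sub (hPmu (σ (t (k + 1))) i) (x (t (k + 1)))
  rw [smul_mulVec, dotProduct_smul, smul_eq_mul] at hjump
  have hV_nonneg : 0 ≤ V (t k) := by
    simpa using (sub_add_cancel (P i) 1 ▸ (hPgeI i).add PosSemidef.one).dotProduct_mulVec_nonneg
      (x (t k))
  have hfactor : mu * exp (-(lam * (t (k + 1) - t k))) ≤ 1 :=
    mul_exp_neg_le_one (by linarith) ((div_le_iff₀' hlam).1 (hdwell k))
  calc _ ≤ mu * V (t (k + 1)) := hjump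
    _ ≤ mu * (exp (-(lam * (t (k + 1) - t k))) * V (t k)) := by gcongr
    _ ≤ V (t k) := by rw [← mul_assoc]; exact mul_le_of_le_one_left hV_nonneg hfactor

/-- Dwell-time switched Lyapunov function is nonincreasing at consecutive switching
times: under `P i ≥ I`, `A iᵀ P i + P i A i ≤ -λ P i`, `P i ≤ μ P j`, and dwell time
`τ_d ≥ ln μ / λ`, along solutions of `ẋ = A (σ t) x` the function
`V(t) = x(t)ᵀ P_{σ(t)} x(t)` satisfies `V(t_{k+1}) ≤ V(t_k)`. -/
theorem switched_lyapunov_nonincreasing_at_switches {n : ℕ} {I : Type*}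
    (A P : I → Matrix (Fin n) (Fin n) ℝ) (lam mu : ℝ)
    (hlam : 0 < lam) (hmu : 1 ≤ mu)
    (hPsymm : ∀ i, (P i).IsSymm)
    (hPgeI : ∀ i, (P i - 1).PosSemidef)
    (hLyap : ∀ i, ((-(lam • P i)) - ((A i)ᵀ * P i + P i * A i)).PosSemidef)
    (hPmu : ∀ i j, (mu • P j - P i).PosSemidef)
    (σ : ℝ → I) (t : ℕ → ℝ) (ht0 : t 0 = 0) (htmono : StrictMono t)
    (hdwell : ∀ k, Real.log mu / lam ≤ t (k + 1) - t k)
    (hσconst : ∀ k, ∀ s ∈ Set.Ico (t k) (t (k + 1)), σ s = σ (t k))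
    (x : ℝ → (Fin n → ℝ)) (hx : ∀ s, HasDerivAt x ((A (σ s)).mulVec (x s)) s) :
    ∀ k, x (t (k + 1)) ⬝ᵥ (P (σ (t (k + 1)))).mulVec (x (t (k + 1))) ≤
      x (t k) ⬝ᵥ (P (σ (t k))).mulVec (x (t k)) :=
  switched_lyapunov_nonincreasing_at_switches_general A P lam mu hlam hmu hPgeI hLyap hPmu σ t
    htmono hdwell hσconst x hx
end

section
/- Let P̄ be a symmetric positive definite block matrix P̄ = [[P, R],[R^T, S]] with P positive definite, and define the Schur complement Q = S - R^T P^{-1} R. If P̄ ≥ I, P̄ is symmetric, and Ā^T P̄ + P̄ Ā ≤ -λ P̄ where Ā is block upper triangular of the form [[A₁, H],[0, F]], then Q ≥ 0 and F^T Q + Q F ≤ -λ Q. -/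
open Matrix

/-!
Congruence with `L = [-P⁻¹R; I]` does everything: `P̄ L = [0; Q]`, so `Lᵀ P̄ L = Q`, and since
`Ā` is block upper triangular the bottom block of `Ā L` is `F`, whence
`Lᵀ (Āᵀ P̄ + P̄ Ā) L = Fᵀ Q + Q F`. Congruence preserves semidefiniteness, so the Lyapunov
inequality for `P̄` becomes the one for `Q`; `Q ≥ 0` is the Schur complement criterion.
-/

section

variable {l m n α : Type*} [Fintype m] [Fintype n] [CommRing α]

-- The ascriptions `(1 : Matrix n n α)` are needed: without them `*` elaborates with the
-- `CStarMatrix` multiplication instance, and the `Matrix` lemmas no longer rewrite.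

theorem fromBlocks_mul_fromRows_neg_inv_mul_one [DecidableEq m] [DecidableEq n]
    (A : Matrix m m α) [Invertible A] (B : Matrix m n α) (C : Matrix n m α) (D : Matrix n n α) :
    fromBlocks A B C D * fromRows (-(A⁻¹ * B)) (1 : Matrix n n α) =
      fromRows 0 (D - C * A⁻¹ * B) := by
  rw [fromBlocks_mul_fromRows, Matrix.mul_neg, Matrix.mul_neg, ← Matrix.mul_assoc A,
    mul_inv_of_invertible, Matrix.one_mul, Matrix.mul_one, Matrix.mul_one, neg_add_cancel,
    ← Matrix.mul_assoc, neg_add_eq_sub]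

theorem transpose_fromRows_mul_fromRows_zero (X : Matrix m l α) (Y : Matrix n l α)
    (Z : Matrix n l α) : (fromRows X Y)ᵀ * fromRows (0 : Matrix m l α) Z = Yᵀ * Z := by
  rw [transpose_fromRows, fromCols_mul_fromRows, Matrix.mul_zero, zero_add]

theorem fromBlocks_zero₂₁_mul_fromRows_one [DecidableEq n] (A₁ : Matrix m m α)
    (H : Matrix m n α) (F : Matrix n n α) (T : Matrix m n α) :
    fromBlocks A₁ H 0 F * fromRows T (1 : Matrix n n α) = fromRows (A₁ * T + H) F := by
  rw [fromBlocks_mul_fromRows, Matrix.mul_one, Matrix.zero_mul, zero_add, Matrix.mul_one]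

theorem transpose_mul_lyapunov_mul_fromRows_one [DecidableEq n]
    {P A : Matrix (m ⊕ n) (m ⊕ n) α} {T X : Matrix m n α} {Q F : Matrix n n α} (hP : Pᵀ = P)
    (hPL : P * fromRows T (1 : Matrix n n α) = fromRows 0 Q)
    (hAL : A * fromRows T (1 : Matrix n n α) = fromRows X F) (c : α) :
    (fromRows T (1 : Matrix n n α))ᵀ * (-(c • P) - (Aᵀ * P + P * A)) *
      fromRows T (1 : Matrix n n α) = -(c • Q) - (Fᵀ * Q + Qᵀ * F) := by
  set L := fromRows T (1 : Matrix n n α)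
  have hLPL : Lᵀ * P * L = Q := by
    rw [Matrix.mul_assoc, hPL, transpose_fromRows_mul_fromRows_zero, transpose_one,
      Matrix.one_mul]
  have hAPL : Lᵀ * Aᵀ * P * L = Fᵀ * Q := by
    rw [Matrix.mul_assoc, Matrix.mul_assoc, hPL, ← Matrix.mul_assoc, ← transpose_mul, hAL,
      transpose_fromRows_mul_fromRows_zero]
  have hPAL : Lᵀ * P * A * L = Qᵀ * F := by
    rw [← hP, ← transpose_mul, hPL, Matrix.mul_assoc, hAL, transpose_fromRows,
      fromCols_mul_fromRows, transpose_zero, Matrix.zero_mul, zero_add]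
  have hexpand : Lᵀ * (-(c • P) - (Aᵀ * P + P * A)) * L =
      -(c • (Lᵀ * P * L)) - (Lᵀ * Aᵀ * P * L + Lᵀ * P * A * L) := by
    simp only [Matrix.mul_sub, Matrix.sub_mul, Matrix.mul_add, Matrix.add_mul, Matrix.mul_neg,
      Matrix.neg_mul, Matrix.mul_smul, Matrix.smul_mul, Matrix.mul_assoc]
  rw [hexpand, hLPL, hAPL, hPAL]

end

theorem schur_complement_lyapunov_reduction_general {n k : ℕ}
    (P : Matrix (Fin n) (Fin n) ℝ) (R : Matrix (Fin n) (Fin k) ℝ)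
    (S : Matrix (Fin k) (Fin k) ℝ)
    (A₁ : Matrix (Fin n) (Fin n) ℝ) (H : Matrix (Fin n) (Fin k) ℝ)
    (F : Matrix (Fin k) (Fin k) ℝ)
    (lam : ℝ)
    (hPbar : (Matrix.fromBlocks P R Rᵀ S).PosDef)
    (hP : P.PosDef)
    (hLyap : ((-(lam • Matrix.fromBlocks P R Rᵀ S)) -
      ((Matrix.fromBlocks A₁ H 0 F)ᵀ * Matrix.fromBlocks P R Rᵀ S +
        Matrix.fromBlocks P R Rᵀ S * Matrix.fromBlocks A₁ H 0 F)).PosSemidef) :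
    (S - Rᵀ * P⁻¹ * R).PosSemidef ∧
      ((-(lam • (S - Rᵀ * P⁻¹ * R))) -
        (Fᵀ * (S - Rᵀ * P⁻¹ * R) + (S - Rᵀ * P⁻¹ * R) * F)).PosSemidef := by
  have : Invertible P := hP.isUnit.invertible
  have hQ : (S - Rᵀ * P⁻¹ * R).PosSemidef := by
    simpa only [conjTranspose_eq_transpose_of_trivial] using
      (PosDef.fromBlocks₁₁ R S hP).mp hPbar.posSemidef
  refine ⟨hQ, ?_⟩
  have hPbarT : (fromBlocks P R Rᵀ S)ᵀ = fromBlocks P R Rᵀ S := by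
    simpa only [IsHermitian, conjTranspose_eq_transpose_of_trivial] using hPbar.1
  have hQT : (S - Rᵀ * P⁻¹ * R)ᵀ = S - Rᵀ * P⁻¹ * R := by
    simpa only [IsHermitian, conjTranspose_eq_transpose_of_trivial] using hQ.1
  have hcongr :=
    hLyap.conjTranspose_mul_mul_same (fromRows (-(P⁻¹ * R)) (1 : Matrix (Fin k) (Fin k) ℝ))
  rwa [conjTranspose_eq_transpose_of_trivial,
    transpose_mul_lyapunov_mul_fromRows_one hPbarT (fromBlocks_mul_fromRows_neg_inv_mul_one ..)
      (fromBlocks_zero₂₁_mul_fromRows_one ..), hQT] at hcongr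

/-- Block reduction of the switched Lyapunov inequality: if
`P̄ = [[P, R],[Rᵀ, S]]` is symmetric positive definite with `P` positive definite,
`P̄ ≥ I`, and `Āᵀ P̄ + P̄ Ā ≤ -λ P̄` for block upper-triangular `Ā = [[A₁, H],[0, F]]`,
then the Schur complement `Q = S - Rᵀ P⁻¹ R` satisfies `Q ≥ 0` and
`Fᵀ Q + Q F ≤ -λ Q`. -/
theorem schur_complement_lyapunov_reduction {n k : ℕ}
    (P : Matrix (Fin n) (Fin n) ℝ) (R : Matrix (Fin n) (Fin k) ℝ)
    (S : Matrix (Fin k) (Fin k) ℝ)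
    (A₁ : Matrix (Fin n) (Fin n) ℝ) (H : Matrix (Fin n) (Fin k) ℝ)
    (F : Matrix (Fin k) (Fin k) ℝ)
    (lam : ℝ) (hlam : 0 < lam)
    (hPbar : (Matrix.fromBlocks P R Rᵀ S).PosDef)
    (hP : P.PosDef)
    (hPbarI : (Matrix.fromBlocks P R Rᵀ S - 1).PosSemidef)
    (hLyap : ((-(lam • Matrix.fromBlocks P R Rᵀ S)) -
      ((Matrix.fromBlocks A₁ H 0 F)ᵀ * Matrix.fromBlocks P R Rᵀ S +
        Matrix.fromBlocks P R Rᵀ S * Matrix.fromBlocks A₁ H 0 F)).PosSemidef) :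
    (S - Rᵀ * P⁻¹ * R).PosSemidef ∧
      ((-(lam • (S - Rᵀ * P⁻¹ * R))) -
        (Fᵀ * (S - Rᵀ * P⁻¹ * R) + (S - Rᵀ * P⁻¹ * R) * F)).PosSemidef :=
  schur_complement_lyapunov_reduction_general P R S A₁ H F lam hPbar hP hLyap
end
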